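/- Let N ≥ 8 be an integer divisible by 4. If b ∈ ℝ^{N/2} satisfies ψ^{(i,j,k,l)}(b) = 0 for all (i,j,k,l) ∈ S_1 ∪ S_2, then ψ^{(i,j,k,l)}(b) = 0 for all (i,j,k,l) ∈ S. -/

import Mathlib

/-- `c_α = cos(απ/N)` -/
noncomputable def cc (N : ℕ) (a : ℤ) : ℝ := Real.cos (a * Real.pi / N)

/-- `s_α = sin(απ/N)` -/
noncomputable def ss (N : ℕ) (a : ℤ) : ℝ := Real.sin (a * Real.pi / N)

/-- `f_q^{(i,j,k,l)}` -/
noncomputable def ff (N : ℕ) (i j k l : ℤ) (q : ℕ) : ℝ :=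
  if Odd q then cc N (i * q) * cc N (j * q) * cc N (k * q) * cc N (l * q)
  else ss N (i * q) * ss N (j * q) * ss N (k * q) * ss N (l * q)

/-- `ψ^{(i,j,k,l)}(b)` -/
noncomputable def psi (N : ℕ) (b : Fin (N / 2) → ℝ) (i j k l : ℤ) : ℝ :=
  -∑ q : Fin (N / 2), (-1 : ℝ) ^ ((q : ℕ) + 1) * b q * ff N i j k l ((q : ℕ) + 1)

/-- `S = {(i,j,k,l) : −N_h ≤ i ≤ j ≤ k ≤ l ≤ N_h, i+j+k+l = N}` with `N_h = N/2 − 1`. -/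
def Sset (N : ℕ) : Set (ℤ × ℤ × ℤ × ℤ) :=
  {x | -((N : ℤ) / 2 - 1) ≤ x.1 ∧ x.1 ≤ x.2.1 ∧ x.2.1 ≤ x.2.2.1 ∧
    x.2.2.1 ≤ x.2.2.2 ∧ x.2.2.2 ≤ (N : ℤ) / 2 - 1 ∧
    x.1 + x.2.1 + x.2.2.1 + x.2.2.2 = (N : ℤ)}

/-- `S₁ = {(0, n+1, N/2−n, N/2−1) : 1 ≤ n ≤ N/4−1}` -/
def S1set (N : ℕ) : Set (ℤ × ℤ × ℤ × ℤ) :=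
  {x | ∃ n : ℤ, 1 ≤ n ∧ n ≤ (N : ℤ) / 4 - 1 ∧
    x = (0, n + 1, (N : ℤ) / 2 - n, (N : ℤ) / 2 - 1)}

/-- `S₂ = {(2−m, m, N/2−1, N/2−1) : m = 1 or 3 ≤ m ≤ N/4+1}` -/
def S2set (N : ℕ) : Set (ℤ × ℤ × ℤ × ℤ) :=
  {x | ∃ m : ℤ, (m = 1 ∨ (3 ≤ m ∧ m ≤ (N : ℤ) / 4 + 1)) ∧
    x = (2 - m, m, (N : ℤ) / 2 - 1, (N : ℤ) / 2 - 1)}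

/-!
For `i + j + k + l = N`, the product-to-sum formulas for four cosines (`q` odd) or four sines
(`q` even) give
`ψ^{(i,j,k,l)}(b) = -(U(i+j) + U(i+k) + U(i+l) + U(0) + V(i) + V(j) + V(k) + V(l)) / 8`,
where `U(a) = ∑ b_q cos(2aqπ/N)` and `V(a) = ∑ (-1)^(q-1) b_q cos(2aqπ/N)`. Since `V` is even and
`V(N/2 - a) = -U(a)`, everything is a function of `V`, and the equations on `S₁ ∪ S₂` say that the
second difference of `V` is a constant `-D` on `[1, N/2 - 1]` with `2 (V(1) - V(0)) = -D`.
Hence `2 V(a) = 2 V(0) - D a²` on `[-N/2, N/2]`, and for such a quadratic `V` the eight-term sum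
vanishes identically on `S`.
-/

open Real

theorem cos_mul_cos_mul_cos_mul_cos_add (x y z : ℝ) :
    8 * (cos x * cos y * cos z * cos (x + y + z)) =
      cos (2 * (x + y)) + cos (2 * (x + z)) + cos (2 * (y + z)) + 1
        + (cos (2 * x) + cos (2 * y) + cos (2 * z) + cos (2 * (x + y + z))) := by
  linear_combination (norm := ring_nf)
    4 * cos z * cos (x + y + z) * two_mul_cos_mul_cos x y
    + 2 * (cos (x - y) + cos (x + y)) * two_mul_cos_mul_cos (x + y + z) z
    + two_mul_cos_mul_cos (x + y) (x - y) + two_mul_cos_mul_cos (x + y + 2 * z) (x - y)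
    + 2 * cos_sq (x + y) + two_mul_cos_mul_cos (x + y + 2 * z) (x + y)

theorem sin_mul_sin_mul_sin_mul_sin_add (x y z : ℝ) :
    8 * (sin x * sin y * sin z * sin (x + y + z)) =
      -(cos (2 * (x + y)) + cos (2 * (x + z)) + cos (2 * (y + z)) + 1)
        + (cos (2 * x) + cos (2 * y) + cos (2 * z) + cos (2 * (x + y + z))) := by
  linear_combination (norm := ring_nf)
    4 * sin z * sin (x + y + z) * two_mul_sin_mul_sin x y
    + 2 * (cos (x - y) - cos (x + y)) * two_mul_sin_mul_sin (x + y + z) z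
    + two_mul_cos_mul_cos (x + y) (x - y) - two_mul_cos_mul_cos (x + y + 2 * z) (x - y)
    - 2 * cos_sq (x + y) + two_mul_cos_mul_cos (x + y + 2 * z) (x + y)

section

variable {x y z w : ℝ} {Q : ℕ}

theorem cos_two_mul_of_add_eq_nat_mul_pi (h : x + y + z + w = Q * π) :
    cos (2 * (x + w)) = cos (2 * (y + z)) ∧ cos (2 * w) = cos (2 * (x + y + z)) := by
  have hw : w = Q * π - (x + y + z) := by linarith
  subst hw
  constructor <;> rw [← cos_nat_mul_two_pi_sub _ Q] <;> ring_nf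

theorem cos_mul_cos_mul_cos_mul_cos_of_add_eq_nat_mul_pi (h : x + y + z + w = Q * π) :
    8 * (cos x * cos y * cos z * cos w) = (-1) ^ Q * (cos (2 * (x + y)) + cos (2 * (x + z))
      + cos (2 * (x + w)) + 1 + (cos (2 * x) + cos (2 * y) + cos (2 * z) + cos (2 * w))) := by
  obtain ⟨h₁, h₂⟩ := cos_two_mul_of_add_eq_nat_mul_pi h
  have hw : cos w = (-1) ^ Q * cos (x + y + z) := by
    rw [← cos_nat_mul_pi_sub, ← h]; ring_nf
  rw [h₁, h₂, hw, ← cos_mul_cos_mul_cos_mul_cos_add]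
  ring

theorem sin_mul_sin_mul_sin_mul_sin_of_add_eq_nat_mul_pi (h : x + y + z + w = Q * π) :
    8 * (sin x * sin y * sin z * sin w) = (-1) ^ Q * (cos (2 * (x + y)) + cos (2 * (x + z))
      + cos (2 * (x + w)) + 1 - (cos (2 * x) + cos (2 * y) + cos (2 * z) + cos (2 * w))) := by
  obtain ⟨h₁, h₂⟩ := cos_two_mul_of_add_eq_nat_mul_pi h
  have hw : sin w = -((-1) ^ Q * sin (x + y + z)) := by
    rw [← sin_nat_mul_pi_sub, ← h]; ring_nf
  rw [h₁, h₂, hw]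
  linear_combination (-(-1) ^ Q : ℝ) * sin_mul_sin_mul_sin_mul_sin_add x y z

end

theorem eight_mul_neg_one_pow_mul_ff {N : ℕ} (hN : (N : ℝ) ≠ 0) {i j k l : ℤ}
    (hsum : i + j + k + l = N) (Q : ℕ) :
    let θ := 2 * π / N
    8 * ((-1) ^ Q * ff N i j k l Q) = cos (Q * ((i + j : ℤ) * θ)) + cos (Q * ((i + k : ℤ) * θ))
      + cos (Q * ((i + l : ℤ) * θ)) + 1 - (-1) ^ Q * (cos (Q * (i * θ)) + cos (Q * (j * θ))
        + cos (Q * (k * θ)) + cos (Q * (l * θ))) := by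
  intro θ
  have hangle : ∀ a : ℤ, (Q : ℝ) * (a * θ) = 2 * (((a * Q : ℤ) : ℝ) * π / N) := by
    intro a; push_cast; ring
  have hangle₂ : ∀ a b : ℤ, (Q : ℝ) * ((a + b : ℤ) * θ)
      = 2 * (((a * Q : ℤ) : ℝ) * π / N + ((b * Q : ℤ) : ℝ) * π / N) := by
    intro a b; push_cast; ring
  have hsumQ : ((i * Q : ℤ) : ℝ) * π / N + ((j * Q : ℤ) : ℝ) * π / N + ((k * Q : ℤ) : ℝ) * π / N
      + ((l * Q : ℤ) : ℝ) * π / N = Q * π := by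
    rw [← add_div, ← add_div, ← add_div, ← add_mul, ← add_mul, ← add_mul, ← Int.cast_add,
      ← Int.cast_add, ← Int.cast_add, ← add_mul, ← add_mul, ← add_mul, hsum]
    push_cast
    field_simp
  rw [hangle₂ i j, hangle₂ i k, hangle₂ i l, hangle i, hangle j, hangle k, hangle l]
  rcases Nat.even_or_odd Q with hQ | hQ
  · rw [ff, if_neg (Nat.not_odd_iff_even.mpr hQ), hQ.neg_one_pow]
    have h := sin_mul_sin_mul_sin_mul_sin_of_add_eq_nat_mul_pi hsumQ
    rw [hQ.neg_one_pow] at h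
    unfold ss
    linear_combination h
  · rw [ff, if_pos hQ, hQ.neg_one_pow]
    have h := cos_mul_cos_mul_cos_mul_cos_of_add_eq_nat_mul_pi hsumQ
    rw [hQ.neg_one_pow] at h
    unfold cc
    linear_combination -h

def psiReduced (u v : ℤ → ℝ) (i j k l : ℤ) : ℝ :=
  u (i + j) + u (i + k) + u (i + l) + u 0 + v i + v j + v k + v l

section CosSeries

variable {n : ℕ}

noncomputable def cosSeries (c : Fin n → ℝ) (x : ℝ) : ℝ :=
  ∑ q, c q * cos (((q : ℕ) + 1 : ℕ) * x)

def alternating (c : Fin n → ℝ) : Fin n → ℝ := fun q => (-1) ^ (q : ℕ) * c q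

theorem alternating_alternating (c : Fin n → ℝ) : alternating (alternating c) = c := by
  ext q
  simp only [alternating, ← mul_assoc, ← pow_add, Even.neg_one_pow ⟨_, rfl⟩, one_mul]

theorem cosSeries_neg (c : Fin n → ℝ) (x : ℝ) : cosSeries c (-x) = cosSeries c x := by
  simp only [cosSeries, mul_neg, cos_neg]

theorem cosSeries_pi_sub (c : Fin n → ℝ) (x : ℝ) :
    cosSeries c (π - x) = -cosSeries (alternating c) x := by
  simp only [cosSeries, alternating, mul_sub, cos_nat_mul_pi_sub, ← Finset.sum_neg_distrib]
  refine Finset.sum_congr rfl fun q _ => ?_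
  rw [Nat.cast_succ, pow_succ]
  ring

theorem cosSeries_alternating_intCast_sub_mul (c : Fin n → ℝ) {M : ℤ} {θ : ℝ}
    (hθ : M * θ = π) (a : ℤ) :
    cosSeries (alternating c) ((M - a : ℤ) * θ) = -cosSeries c (a * θ) := by
  rw [Int.cast_sub, sub_mul, hθ, cosSeries_pi_sub, alternating_alternating]

end CosSeries

theorem psi_eq_neg_psiReduced {N : ℕ} (hN : (N : ℝ) ≠ 0) (b : Fin (N / 2) → ℝ) {i j k l : ℤ}
    (hsum : i + j + k + l = N) :
    psi N b i j k l = -(1 / 8) * psiReduced (fun a => cosSeries b (a * (2 * π / N)))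
      (fun a => cosSeries (alternating b) (a * (2 * π / N))) i j k l := by
  simp only [psi, psiReduced, cosSeries, alternating, ← Finset.sum_add_distrib, Finset.mul_sum,
    ← Finset.sum_neg_distrib]
  refine Finset.sum_congr rfl fun q _ => ?_
  have h := eight_mul_neg_one_pow_mul_ff hN hsum ((q : ℕ) + 1)
  simp only [Int.cast_zero, zero_mul, mul_zero, cos_zero]
  linear_combination (-(1 / 8) * b q) * h

def secondDiff (f : ℤ → ℝ) (a : ℤ) : ℝ := f (a + 1) - 2 * f a + f (a - 1)

theorem secondDiff_add (f g : ℤ → ℝ) (a : ℤ) :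
    secondDiff (f + g) a = secondDiff f a + secondDiff g a := by
  simp only [secondDiff, Pi.add_apply]; ring

theorem secondDiff_sub_of_eq_neg {f g : ℤ → ℝ} {M : ℤ} (h : ∀ a, g (M - a) = -f a) (a : ℤ) :
    secondDiff g (M - a) = -secondDiff f a := by
  have e₁ : M - a + 1 = M - (a - 1) := by ring
  have e₂ : M - a - 1 = M - (a + 1) := by ring
  simp only [secondDiff, e₁, e₂, h]; ring

theorem two_mul_eq_of_secondDiff_eq {f : ℤ → ℝ} {C : ℝ} {n : ℤ}
    (h : ∀ a, 1 ≤ a → a ≤ n → secondDiff f a = C) {a : ℤ} (ha₀ : 0 ≤ a) (ha : a ≤ n + 1) :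
    2 * f a = 2 * f 0 + 2 * a * (f 1 - f 0) + C * a * (a - 1) := by
  let P : ℤ → Prop := fun a => 2 * f a = 2 * f 0 + 2 * a * (f 1 - f 0) + C * a * (a - 1)
  have hP : ∀ a, 0 ≤ a → a ≤ n → P a ∧ P (a + 1) := by
    intro a ha₀
    induction a, ha₀ using Int.leInduction with
    | base => intro _; constructor <;> simp only [P] <;> push_cast <;> ring
    | succ a ha₀ ih =>
      intro ha
      obtain ⟨hPa, hPa₁⟩ := ih (by omega)
      have hC := h (a + 1) (by omega) ha
      rw [secondDiff, add_sub_cancel_right] at hC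
      refine ⟨hPa₁, ?_⟩
      simp only [P] at hPa hPa₁ ⊢
      push_cast at hPa₁ ⊢
      linear_combination 2 * hC + 2 * hPa₁ - hPa
  obtain rfl | ha₁ := eq_or_lt_of_le ha₀
  · push_cast; ring
  · simpa only [P, sub_add_cancel] using (hP (a - 1) (by omega) (by omega)).2

theorem psiReduced_eq_zero_of_quadratic {u v : ℤ → ℝ} {M : ℤ} {c D : ℝ}
    (hu : ∀ p, u p = -v (M - p)) (hv : ∀ a, -M ≤ a → a ≤ M → 2 * v a = c - D * a ^ 2)
    {i j k l : ℤ} (hi : -M ≤ i) (hij : i ≤ j) (hjk : j ≤ k) (hkl : k ≤ l) (hl : l ≤ M)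
    (hsum : i + j + k + l = 2 * M) : psiReduced u v i j k l = 0 := by
  have hsumℝ : (i : ℝ) + j + k + l = 2 * M := by exact_mod_cast hsum
  simp only [psiReduced, hu, sub_zero]
  linear_combination (norm := (push_cast; ring)) (D * (i - M)) * hsumℝ + (1 / 2 : ℝ) *
    (hv i (by omega) (by omega) + hv j (by omega) (by omega)
    + hv k (by omega) (by omega) + hv l (by omega) (by omega)
    - hv (M - (i + j)) (by omega) (by omega) - hv (M - (i + k)) (by omega) (by omega)
    - hv (M - (i + l)) (by omega) (by omega) - hv M (by omega) le_rfl)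

section Folding

variable {u v : ℤ → ℝ} {K : ℤ}

theorem psiReduced_S1 (hu : ∀ a, u (2 * K - a) = -v a) (hv : ∀ a, v (2 * K - a) = -u a)
    (n : ℤ) : psiReduced u v 0 (n + 1) (2 * K - n) (2 * K - 1)
      = ((u + v) (n + 1) - (u + v) n) - ((u + v) 1 - (u + v) 0) := by
  simp only [psiReduced, zero_add, hu, hv, Pi.add_apply]; ring

theorem psiReduced_S2 (hu : ∀ a, u (2 * K - a) = -v a) (hv : ∀ a, v (2 * K - a) = -u a)
    (hev : ∀ a, v (-a) = v a) (m : ℤ) :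
    psiReduced u v (2 - m) m (2 * K - 1) (2 * K - 1) = secondDiff v (m - 1) + secondDiff u 1 := by
  have e₁ : 2 - m + (2 * K - 1) = 2 * K - (m - 1) := by ring
  have e₂ : 2 - m = -(m - 1 - 1) := by ring
  rw [psiReduced, secondDiff, secondDiff, sub_add_cancel, e₁, hu, hv, e₂, hev, sub_add_cancel]
  norm_num
  ring

theorem secondDiff_eq_of_psiReduced_eq_zero (hK : 2 ≤ K) (hev : ∀ a, v (-a) = v a)
    (hu : ∀ a, u (2 * K - a) = -v a) (hv : ∀ a, v (2 * K - a) = -u a)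
    (h₁ : ∀ n, 1 ≤ n → n ≤ K - 1 → psiReduced u v 0 (n + 1) (2 * K - n) (2 * K - 1) = 0)
    (h₂ : ∀ m, m = 1 ∨ 3 ≤ m ∧ m ≤ K + 1 → psiReduced u v (2 - m) m (2 * K - 1) (2 * K - 1) = 0)
    (c : ℤ) (hc₁ : 1 ≤ c) (hc₂ : c ≤ 2 * K - 1) : secondDiff v c = -secondDiff u 1 := by
  have hw : ∀ n, 1 ≤ n → n ≤ K - 1 → secondDiff (u + v) n = 0 := by
    intro n hn₁ hn₂
    have hn := h₁ n hn₁ hn₂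
    rw [psiReduced_S1 hu hv] at hn
    obtain rfl | hn₁ := eq_or_lt_of_le hn₁
    · norm_num [secondDiff] at hn ⊢
      linear_combination hn
    have hn' := h₁ (n - 1) (by omega) (by omega)
    rw [psiReduced_S1 hu hv, sub_add_cancel] at hn'
    rw [secondDiff]
    linear_combination hn - hn'
  have hlow : ∀ c, 1 ≤ c → c ≤ K → secondDiff v c = -secondDiff u 1 := by
    intro c hc₁ hc₂
    obtain rfl | hc₁ := eq_or_lt_of_le hc₁
    · linear_combination (secondDiff_add u v 1).symm.trans (hw 1 le_rfl (by omega))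
    · have := h₂ (c + 1) (Or.inr ⟨by omega, by omega⟩)
      rw [psiReduced_S2 hu hv hev, add_sub_cancel_right] at this
      linear_combination this
  rcases le_or_gt c K with hc | hc
  · exact hlow c hc₁ hc
  -- Above `K`, reflection gives `Δ²v(c) = -Δ²u(2K - c)`, and `S₁` makes `Δ²(u + v)` vanish there.
  · have hn₁ : 1 ≤ 2 * K - c := by omega
    have hn₂ : 2 * K - c ≤ K - 1 := by omega
    have := secondDiff_sub_of_eq_neg hv (2 * K - c)
    rw [sub_sub_cancel] at this
    rw [this]
    linear_combination -(secondDiff_add u v _).symm.trans (hw _ hn₁ hn₂) + hlow _ hn₁ (by omega)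

theorem psiReduced_eq_zero_of_eq_zero_on_S1_S2 (hK : 2 ≤ K) (hev : ∀ a, v (-a) = v a)
    (hv : ∀ a, v (2 * K - a) = -u a)
    (h₁ : ∀ n, 1 ≤ n → n ≤ K - 1 → psiReduced u v 0 (n + 1) (2 * K - n) (2 * K - 1) = 0)
    (h₂ : ∀ m, m = 1 ∨ 3 ≤ m ∧ m ≤ K + 1 → psiReduced u v (2 - m) m (2 * K - 1) (2 * K - 1) = 0)
    {i j k l : ℤ} (hi : -(2 * K) ≤ i) (hij : i ≤ j) (hjk : j ≤ k) (hkl : k ≤ l) (hl : l ≤ 2 * K)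
    (hsum : i + j + k + l = 4 * K) : psiReduced u v i j k l = 0 := by
  have hu : ∀ a, u (2 * K - a) = -v a := fun a => by
    have h := hv (2 * K - a)
    rw [sub_sub_cancel] at h
    linear_combination h
  have hΔ := secondDiff_eq_of_psiReduced_eq_zero hK hev hu hv h₁ h₂
  have h₀ : 2 * (v 1 - v 0) = -secondDiff u 1 := by
    have := h₂ 1 (Or.inl rfl)
    rw [psiReduced_S2 hu hv hev, secondDiff] at this
    norm_num [hev] at this
    linear_combination this
  have hquad : ∀ a, -(2 * K) ≤ a → a ≤ 2 * K → 2 * v a = 2 * v 0 - secondDiff u 1 * a ^ 2 := by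
    intro a ha₁ ha₂
    wlog ha : 0 ≤ a generalizing a
    · simpa only [hev, Int.cast_neg, neg_sq] using this (-a) (by omega) (by omega) (by omega)
    have := two_mul_eq_of_secondDiff_eq hΔ ha (by omega)
    linear_combination this + a * h₀
  exact psiReduced_eq_zero_of_quadratic (M := 2 * K) (fun p => by linear_combination hv p) hquad
    hi hij hjk hkl hl (by linarith)

end Folding

theorem sum_eq_of_mem_S1set_union_S2set {N : ℕ} (hN : 2 ∣ N) {x : ℤ × ℤ × ℤ × ℤ}
    (hx : x ∈ S1set N ∪ S2set N) : x.1 + x.2.1 + x.2.2.1 + x.2.2.2 = N := by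
  rcases hx with ⟨n, -, -, rfl⟩ | ⟨m, -, rfl⟩ <;> dsimp only <;> omega

theorem psiReduced_eq_zero_on_Sset {u v : ℤ → ℝ} {K : ℕ} (hK : 2 ≤ K)
    (hev : ∀ a, v (-a) = v a) (hv : ∀ a, v (2 * K - a) = -u a)
    (h : ∀ x ∈ S1set (4 * K) ∪ S2set (4 * K), psiReduced u v x.1 x.2.1 x.2.2.1 x.2.2.2 = 0) :
    ∀ x ∈ Sset (4 * K), psiReduced u v x.1 x.2.1 x.2.2.1 x.2.2.2 = 0 := by
  have hhalf : ((4 * K : ℕ) : ℤ) / 2 = 2 * K := by omega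
  rintro ⟨i, j, k, l⟩ ⟨hi, hij, hjk, hkl, hl, hsum⟩
  dsimp only at hi hij hjk hkl hl hsum ⊢
  refine psiReduced_eq_zero_of_eq_zero_on_S1_S2 (by omega) hev hv (fun n hn₁ hn₂ => ?_)
    (fun m hm => ?_) (by omega) hij hjk hkl (by omega) (by omega)
  · exact h (0, n + 1, 2 * K - n, 2 * K - 1) (Or.inl ⟨n, hn₁, by omega, by rw [hhalf]⟩)
  · exact h (2 - m, m, 2 * K - 1, 2 * K - 1) (Or.inr ⟨m, by omega, by rw [hhalf]⟩)

theorem psi_zero_on_S_of_zero_on_S1_union_S2 (N : ℕ) (hN4 : 4 ∣ N) (hN8 : 8 ≤ N)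
    (b : Fin (N / 2) → ℝ)
    (hb : ∀ x ∈ S1set N ∪ S2set N, psi N b x.1 x.2.1 x.2.2.1 x.2.2.2 = 0) :
    ∀ x ∈ Sset N, psi N b x.1 x.2.1 x.2.2.1 x.2.2.2 = 0 := by
  obtain ⟨K, rfl⟩ := hN4
  have hN : ((4 * K : ℕ) : ℝ) ≠ 0 := Nat.cast_ne_zero.mpr (by omega)
  set θ := 2 * π / ((4 * K : ℕ) : ℝ)
  have hθ : ((2 * K : ℤ) : ℝ) * θ = π := by
    have hK : (K : ℝ) ≠ 0 := by exact_mod_cast (show K ≠ 0 by omega)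
    simp only [θ]
    push_cast
    field_simp
    ring
  have hψ := fun (x : ℤ × ℤ × ℤ × ℤ)
    (hx : x.1 + x.2.1 + x.2.2.1 + x.2.2.2 = ((4 * K : ℕ) : ℤ)) => psi_eq_neg_psiReduced hN b hx
  have hred := psiReduced_eq_zero_on_Sset (K := K) (u := fun a => cosSeries b (a * θ))
    (v := fun a => cosSeries (alternating b) (a * θ)) (by omega)
    (fun a => by simp only [Int.cast_neg, neg_mul, cosSeries_neg])
    (cosSeries_alternating_intCast_sub_mul b hθ)
    fun x hx => by
      have h := hb x hx
      rw [hψ x (sum_eq_of_mem_S1set_union_S2set (dvd_mul_of_dvd_left (by norm_num) K) hx)] at h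
      linarith
  intro x hx
  rw [hψ x hx.2.2.2.2.2, hred x hx, mul_zero]
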